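/- Let A and B be linear subspaces of ℝ^n, and set Ã = A + (A^⊥ ∩ B^⊥) and B̃ = B + (A^⊥ ∩ B^⊥). Then for every x ∈ ℝ^n, R_Ã R_B̃ x = R_A R_B x; consequently the Douglas–Rachford operators coincide: ½(R_Ã R_B̃ + Id) x = ½(R_A R_B + Id) x for all x ∈ ℝ^n. -/

import Mathlib

/-!
Write `C = Aᗮ ⊓ Bᗮ`. Since `C` is orthogonal to both `A` and `B`, reflecting across `A ⊔ C` is
reflecting across `A` composed with reflecting across `Cᗮ` (in either order, as they commute), and
likewise for `B ⊔ C`. In `R_{A⊔C} R_{B⊔C}` the two reflections across `Cᗮ` then meet in the middle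
and cancel, leaving `R_A R_B`.
-/

/-- The reflection across a subspace `K` of Euclidean space, `R_K = 2 P_K - Id`. -/
noncomputable def reflS {n : ℕ} (K : Submodule ℝ (EuclideanSpace ℝ (Fin n)))
    (x : EuclideanSpace ℝ (Fin n)) : EuclideanSpace ℝ (Fin n) :=
  (2:ℝ) • (K.orthogonalProjectionOnto x : EuclideanSpace ℝ (Fin n)) - x

namespace Submodule

variable {𝕜 E : Type*} [RCLike 𝕜] [NormedAddCommGroup E] [InnerProductSpace 𝕜 E]
  {U V : Submodule 𝕜 E} [U.HasOrthogonalProjection] [V.HasOrthogonalProjection]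

theorem IsOrtho.starProjection_sup_apply [(U ⊔ V).HasOrthogonalProjection] (h : U ⟂ V) (x : E) :
    (U ⊔ V).starProjection x = U.starProjection x + V.starProjection x := by
  refine eq_starProjection_of_mem_orthogonal
    (add_mem_sup (starProjection_apply_mem U x) (starProjection_apply_mem V x)) ?_
  rw [← inf_orthogonal]
  refine mem_inf.mpr ⟨?_, ?_⟩
  · simpa only [sub_add_eq_sub_sub] using
      sub_mem (sub_starProjection_mem_orthogonal x) (h.symm.le (starProjection_apply_mem V x))
  · simpa only [sub_add_eq_sub_sub_swap] using
      sub_mem (sub_starProjection_mem_orthogonal x) (h.le (starProjection_apply_mem U x))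

theorem IsOrtho.reflection_sup_apply_eq_reflection_reflection_orthogonal
    [(U ⊔ V).HasOrthogonalProjection] (h : U ⟂ V) (x : E) :
    (U ⊔ V).reflection x = U.reflection (Vᗮ.reflection x) := by
  have hUV : U.starProjection (V.starProjection x) = 0 :=
    (starProjection_apply_eq_zero_iff _).mpr (h.symm.le (starProjection_apply_mem V x))
  rw [reflection_orthogonal_apply]
  simp only [reflection_apply, h.starProjection_sup_apply, map_neg, map_sub, map_nsmul, hUV]
  module

theorem IsOrtho.reflection_sup_apply_eq_reflection_orthogonal_reflection
    [(U ⊔ V).HasOrthogonalProjection] (h : U ⟂ V) (x : E) :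
    (U ⊔ V).reflection x = Vᗮ.reflection (U.reflection x) := by
  have hVU : V.starProjection (U.starProjection x) = 0 :=
    (starProjection_apply_eq_zero_iff _).mpr (h.le (starProjection_apply_mem U x))
  rw [reflection_orthogonal_apply]
  simp only [reflection_apply, h.starProjection_sup_apply, map_sub, map_nsmul, hVU]
  module

theorem reflection_sup_reflection_sup_apply {W : Submodule 𝕜 E} [W.HasOrthogonalProjection]
    [(U ⊔ W).HasOrthogonalProjection] [(V ⊔ W).HasOrthogonalProjection]
    (hU : U ⟂ W) (hV : V ⟂ W) (x : E) :
    (U ⊔ W).reflection ((V ⊔ W).reflection x) = U.reflection (V.reflection x) := by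
  rw [hU.reflection_sup_apply_eq_reflection_reflection_orthogonal,
    hV.reflection_sup_apply_eq_reflection_orthogonal_reflection, reflection_reflection]

end Submodule

theorem reflS_eq_reflection {n : ℕ} (K : Submodule ℝ (EuclideanSpace ℝ (Fin n)))
    (x : EuclideanSpace ℝ (Fin n)) : reflS K x = K.reflection x := by
  rw [reflS, Submodule.reflection_apply, two_smul, two_smul]
  rfl

/-- For linear subspaces `A, B` of ℝⁿ with enlargements `Ã = A + (A^⊥ ∩ B^⊥)` and
`B̃ = B + (A^⊥ ∩ B^⊥)`: `R_Ã R_B̃ = R_A R_B` everywhere, and hence the Douglas–Rachford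
operators `½(R_Ã R_B̃ + Id)` and `½(R_A R_B + Id)` coincide. -/
theorem stmt16 {n : ℕ} (A B : Submodule ℝ (EuclideanSpace ℝ (Fin n))) :
    ∀ x : EuclideanSpace ℝ (Fin n),
      reflS (A ⊔ (Aᗮ ⊓ Bᗮ)) (reflS (B ⊔ (Aᗮ ⊓ Bᗮ)) x) = reflS A (reflS B x) ∧
      (1/2 : ℝ) • (reflS (A ⊔ (Aᗮ ⊓ Bᗮ)) (reflS (B ⊔ (Aᗮ ⊓ Bᗮ)) x) + x) =
        (1/2 : ℝ) • (reflS A (reflS B x) + x) := by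
  intro x
  have hA : A ⟂ Aᗮ ⊓ Bᗮ := A.isOrtho_orthogonal_right.mono_right inf_le_left
  have hB : B ⟂ Aᗮ ⊓ Bᗮ := B.isOrtho_orthogonal_right.mono_right inf_le_right
  have key : reflS (A ⊔ (Aᗮ ⊓ Bᗮ)) (reflS (B ⊔ (Aᗮ ⊓ Bᗮ)) x) = reflS A (reflS B x) := by
    simp only [reflS_eq_reflection]
    exact Submodule.reflection_sup_reflection_sup_apply hA hB x
  exact ⟨key, by rw [key]⟩
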